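/- Let n be a positive integer, δ ∈ {0, 1}, A, B real with −1 < B ≤ 0 < A ≤ 1, and β ∈ ℂ \ {0} with |β| ≥ ((1 + e²)^{3/2}/(√2 e))^n ((1 + A)/(1 + B) + ω₀^δ). If p ∈ ℋ satisfies (p(z))^δ + β (z p′(z))^n ≺ (1 + Az)/(1 + Bz), then p(z) ≺ 𝔅(z). -/

import Mathlib

/-
With `C = (1 + A)/(1 + B)`, fix `r < 1` and let `m = sup_{|z|<r} |p z|`. The subordination gives
`‖β‖ |z p'(z)|^n ≤ C + m^δ`, so Schwarz's lemma for `z ↦ z p'(z)` gives `|p'| ≤ σ/r` on `|z| < r`,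
where `‖β‖ σ^n = C + m^δ`; hence `|p - 1| ≤ σ` there and `m ≤ 1 + σ`. With `K` the constant in the
hypothesis on `‖β‖`, this yields `(Kσ)^n (C + ω₀^δ) ≤ C + 1 + δσ`, which forces `Kσ ≤ 1` as
`K ≥ 6` and `ω₀ ≥ 7/6`. So `|p - 1| ≤ 1/6` on 𝔻, hence `|p² - 1| ≤ 1/2` and `Re p > 0`,
and `w = artanh (p² - 1)` is a Schwarz function with `𝔅 ∘ w = p`.
-/

open Complex

noncomputable section

/-- The open unit disk in the complex plane. -/
def unitDisk : Set ℂ := Metric.ball 0 1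

/-- `f` is subordinate to `g` on the unit disk: there is an analytic Schwarz function `w`
with `w 0 = 0`, `|w z| < 1` on the disk, and `f = g ∘ w` on the disk. -/
def Subord (f g : ℂ → ℂ) : Prop :=
  ∃ w : ℂ → ℂ, DifferentiableOn ℂ w unitDisk ∧ w 0 = 0 ∧
    (∀ z ∈ unitDisk, ‖w z‖ < 1) ∧ ∀ z ∈ unitDisk, f z = g (w z)

/-- The function `𝔅(z) = √(1 + tanh z)` (principal branch). -/
def bean (z : ℂ) : ℂ := (1 + Complex.tanh z) ^ ((1 : ℂ) / 2)

/-- `R₀ = e √(2/(e² - 1))`. -/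
def R₀ : ℝ := Real.exp 1 * Real.sqrt (2 / (Real.exp 1 ^ 2 - 1))

/-- `ω₀ = max_{θ ∈ [0, 2π)} |𝔅(e^{iθ})|`. -/
def ω₀ : ℝ :=
  sSup ((fun θ : ℝ => ‖bean (Complex.exp (θ * Complex.I))‖) '' Set.Ico 0 (2 * Real.pi))

open Metric Set

lemma six_le_coeff :
    (6 : ℝ) ≤ (1 + Real.exp 1 ^ 2) ^ ((3 : ℝ) / 2) / (Real.sqrt 2 * Real.exp 1) := by
  set s := Real.exp 1 ^ 2 with hs_def
  have hs : 7 ≤ s := by nlinarith [Real.exp_one_gt_d9]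
  have hX : ((1 + s) ^ ((3 : ℝ) / 2)) ^ 2 = (1 + s) ^ 3 := by
    rw [← Real.rpow_natCast, ← Real.rpow_mul (by positivity)]
    norm_num
  rw [le_div_iff₀ (by positivity),
    ← pow_le_pow_iff_left₀ (by positivity) (by positivity) two_ne_zero, hX, mul_pow, mul_pow,
    Real.sq_sqrt zero_le_two, ← hs_def]
  nlinarith [mul_nonneg (sub_nonneg.2 hs) (sub_nonneg.2 hs)]

lemma norm_bean (z : ℂ) : ‖bean z‖ = ‖1 + tanh z‖ ^ ((1 : ℝ) / 2) := by
  rw [bean, ← norm_cpow_real]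
  norm_num

lemma cosh_ne_zero_of_norm_le_one {z : ℂ} (hz : ‖z‖ ≤ 1) : cosh z ≠ 0 := by
  rw [← cos_mul_I, Ne, cos_eq_zero_iff]
  rintro ⟨k, hk⟩
  have hk1 : (1 : ℝ) ≤ |(2 * k + 1 : ℝ)| := by
    have : (1 : ℤ) ≤ |2 * k + 1| := Int.one_le_abs (by omega)
    exact_mod_cast this
  have hk' : z * I = (((2 * k + 1) * Real.pi / 2 : ℝ) : ℂ) := by
    rw [hk]
    push_cast
    ring
  have := congrArg norm hk'
  rw [norm_mul, norm_I, mul_one, norm_real, Real.norm_eq_abs, abs_div, abs_mul,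
    abs_of_pos Real.pi_pos, abs_two] at this
  nlinarith [Real.pi_gt_three]

lemma bddAbove_norm_bean_circle :
    BddAbove ((fun θ : ℝ => ‖bean (exp (θ * I))‖) '' Ico 0 (2 * Real.pi)) := by
  have hcont : ContinuousOn (fun z => ‖bean z‖) (closedBall 0 1) := by
    simp_rw [norm_bean, tanh_eq_sinh_div_cosh]
    refine (continuousOn_const.add (continuous_sinh.continuousOn.div continuous_cosh.continuousOn
      fun z hz => cosh_ne_zero_of_norm_le_one (by simpa using hz))).norm.rpow_const
      fun _ _ => Or.inr (by norm_num)
  refine ((isCompact_closedBall 0 1).bddAbove_image hcont).mono ?_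
  rintro _ ⟨θ, -, rfl⟩
  exact mem_image_of_mem _ (by simp [norm_exp_ofReal_mul_I])

lemma seven_div_six_le_ω₀ : (7 / 6 : ℝ) ≤ ω₀ := by
  refine le_trans ?_ (le_csSup bddAbove_norm_bean_circle ⟨0, ⟨le_rfl, by positivity⟩, rfl⟩)
  have htanh : (13 / 36 : ℝ) ≤ Real.tanh 1 := by
    rw [Real.tanh_eq, Real.exp_neg, le_div_iff₀ (by positivity)]
    have he := Real.exp_one_gt_d9
    field_simp
    nlinarith
  have h1 : ‖1 + tanh 1‖ = 1 + Real.tanh 1 := by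
    rw [← ofReal_one, ← ofReal_tanh, ← ofReal_add, norm_real, Real.norm_of_nonneg (by linarith)]
  simp only [ofReal_zero, zero_mul, exp_zero, norm_bean, h1, ← Real.sqrt_eq_rpow]
  exact Real.le_sqrt_of_sq_le (by linarith)

lemma dslope_mul_deriv {p : ℂ → ℂ} (hp : DifferentiableAt ℂ (deriv p) 0) (ζ : ℂ) :
    dslope (fun z => z * deriv p z) 0 ζ = deriv p ζ := by
  rcases eq_or_ne ζ 0 with rfl | hζ
  · simpa using ((hasDerivAt_id' 0).fun_mul hp.hasDerivAt).deriv
  · rw [dslope_of_ne _ hζ, slope_def_field]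
    field_simp
    ring

-- Schwarz's lemma for `z ↦ z p'(z)` bounds `p'`; then the mean value inequality.
lemma norm_sub_le_of_norm_mul_deriv_le {p : ℂ → ℂ} {r σ : ℝ}
    (hp : DifferentiableOn ℂ p (ball 0 r)) (h : ∀ ζ ∈ ball (0 : ℂ) r, ‖ζ * deriv p ζ‖ ≤ σ)
    {ζ : ℂ} (hζ : ζ ∈ ball (0 : ℂ) r) : ‖p ζ - p 0‖ ≤ σ / r * ‖ζ‖ := by
  have hr : 0 < r := pos_of_mem_ball hζ
  have hdp : DifferentiableOn ℂ (deriv p) (ball 0 r) := hp.deriv isOpen_ball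
  have hH : DifferentiableOn ℂ (fun z => z * deriv p z) (ball 0 r) := differentiableOn_id.mul hdp
  have hmaps : MapsTo (fun z => z * deriv p z) (ball 0 r) (closedBall (0 * deriv p 0) σ) :=
    fun z hz => by simpa using h z hz
  have hderiv : ∀ z ∈ ball (0 : ℂ) r, ‖deriv p z‖ ≤ σ / r := fun z hz => by
    rw [← dslope_mul_deriv (hdp.differentiableAt (isOpen_ball.mem_nhds (mem_ball_self hr)))]
    exact norm_dslope_le_div_of_mapsTo_ball hH hmaps hz
  simpa using (convex_ball (0 : ℂ) r).norm_image_sub_le_of_norm_deriv_le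
    (fun z hz => hp.differentiableAt (isOpen_ball.mem_nhds hz)) hderiv (mem_ball_self hr) hζ

lemma one_sub_mem_slitPlane_of_norm_lt_one {u : ℂ} (hu : ‖u‖ < 1) : 1 - u ∈ slitPlane := by
  rw [sub_eq_add_neg]
  exact mem_slitPlane_of_norm_lt_one (by rwa [norm_neg])

def artanh (u : ℂ) : ℂ := (log (1 + u) - log (1 - u)) / 2

lemma tanh_artanh {u : ℂ} (h₁ : 1 + u ≠ 0) (h₂ : 1 - u ≠ 0) : tanh (artanh u) = u := by
  set a := exp (log (1 + u) / 2)
  set b := exp (log (1 - u) / 2)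
  have ha : a ^ 2 = 1 + u := by
    rw [← exp_nat_mul, Nat.cast_ofNat, mul_div_cancel₀ _ two_ne_zero, exp_log h₁]
  have hb : b ^ 2 = 1 - u := by
    rw [← exp_nat_mul, Nat.cast_ofNat, mul_div_cancel₀ _ two_ne_zero, exp_log h₂]
  have ha0 : a ≠ 0 := exp_ne_zero _
  have hb0 : b ≠ 0 := exp_ne_zero _
  have hexp : exp (artanh u) = a / b := by rw [artanh, sub_div, exp_sub]
  rw [tanh_eq_sinh_div_cosh, sinh, cosh, exp_neg, hexp]
  field_simp
  rw [ha, hb]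
  ring

lemma norm_artanh_le {u : ℂ} (hu : ‖u‖ ≤ 1 / 2) : ‖artanh u‖ ≤ 3 / 2 * ‖u‖ := by
  have h₁ := norm_log_one_add_half_le_self hu
  have h₂ := norm_log_one_add_half_le_self (z := -u) (by rwa [norm_neg])
  rw [norm_neg, ← sub_eq_add_neg] at h₂
  rw [artanh, norm_div, RCLike.norm_two]
  linarith [norm_sub_le (log (1 + u)) (log (1 - u))]

lemma bean_artanh_sq_sub_one {q : ℂ} (hq : 0 < q.re) (h : ‖q ^ 2 - 1‖ < 1) :
    bean (artanh (q ^ 2 - 1)) = q := by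
  have h₁ := slitPlane_ne_zero (mem_slitPlane_of_norm_lt_one h)
  have h₂ := slitPlane_ne_zero (one_sub_mem_slitPlane_of_norm_lt_one h)
  rw [bean, tanh_artanh h₁ h₂, add_sub_cancel, one_div, sq_cpow_two_inv hq]

lemma re_pos_and_norm_sq_sub_one_le {q : ℂ} (hq : ‖q - 1‖ ≤ 1 / 6) :
    0 < q.re ∧ ‖q ^ 2 - 1‖ ≤ 1 / 2 := by
  refine ⟨?_, ?_⟩
  · have := neg_le_of_abs_le ((abs_re_le_norm (q - 1)).trans hq)
    rw [sub_re, one_re] at this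
    linarith
  · calc ‖q ^ 2 - 1‖ = ‖q - 1‖ * ‖(q - 1) + 2‖ := by rw [← norm_mul]; ring_nf
      _ ≤ 1 / 6 * (1 / 6 + 2) := by
        gcongr
        exact (norm_add_le _ _).trans (by rw [RCLike.norm_two]; linarith)
      _ ≤ 1 / 2 := by norm_num

lemma subord_bean_of_norm_sub_one_le {p : ℂ → ℂ} (hp : DifferentiableOn ℂ p unitDisk)
    (hp0 : p 0 = 1) (h : ∀ z ∈ unitDisk, ‖p z - 1‖ ≤ 1 / 6) : Subord p bean := by
  have hq := fun z hz => re_pos_and_norm_sq_sub_one_le (h z hz)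
  have hu : ∀ z ∈ unitDisk, ‖p z ^ 2 - 1‖ < 1 := fun z hz => (hq z hz).2.trans_lt (by norm_num)
  refine ⟨fun z => artanh (p z ^ 2 - 1), fun z hz => ?_, by simp [artanh, hp0], fun z hz => ?_,
    fun z hz => (bean_artanh_sq_sub_one (hq z hz).1 (hu z hz)).symm⟩
  · have hpz := (hp.differentiableAt (isOpen_ball.mem_nhds hz)).pow 2 |>.sub_const 1
    refine DifferentiableAt.differentiableWithinAt ?_
    unfold artanh
    refine ((((differentiableAt_const 1).add hpz).clog (mem_slitPlane_of_norm_lt_one (hu z hz))).sub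
      (((differentiableAt_const 1).sub hpz).clog ?_)).div_const 2
    exact one_sub_mem_slitPlane_of_norm_lt_one (hu z hz)
  · calc ‖artanh (p z ^ 2 - 1)‖ ≤ 3 / 2 * ‖p z ^ 2 - 1‖ := norm_artanh_le (hq z hz).2
      _ ≤ 3 / 2 * (1 / 2) := by gcongr; exact (hq z hz).2
      _ < 1 := by norm_num

lemma norm_one_add_mul_div_one_add_mul_le {A B : ℝ} (hA : 0 ≤ A) (hB1 : -1 < B) (hB0 : B ≤ 0)
    {w : ℂ} (hw : ‖w‖ ≤ 1) : ‖(1 + A * w) / (1 + B * w)‖ ≤ (1 + A) / (1 + B) := by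
  have hnum : ‖1 + (A : ℂ) * w‖ ≤ 1 + A := by
    refine (norm_add_le _ _).trans ?_
    rw [norm_one, norm_mul, norm_real, Real.norm_of_nonneg hA]
    nlinarith
  have hden : 1 + B ≤ ‖1 + (B : ℂ) * w‖ := by
    refine le_trans ?_ (norm_sub_norm_le 1 (-(B * w))) |>.trans_eq (by rw [sub_neg_eq_add])
    rw [norm_one, norm_neg, norm_mul, norm_real, Real.norm_of_nonpos hB0]
    nlinarith
  rw [norm_div]
  exact div_le_div₀ (by linarith) hnum (by linarith) hden

lemma norm_mul_deriv_pow_le_of_subord {n δ : ℕ} {A B : ℝ} (hA : 0 ≤ A) (hB1 : -1 < B)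
    (hB0 : B ≤ 0) {β : ℂ} {p : ℂ → ℂ}
    (hsub : Subord (fun z => p z ^ δ + β * (z * deriv p z) ^ n)
      (fun z => (1 + (A : ℂ) * z) / (1 + (B : ℂ) * z))) :
    ∀ ζ ∈ unitDisk, ‖β‖ * ‖ζ * deriv p ζ‖ ^ n ≤ (1 + A) / (1 + B) + ‖p ζ‖ ^ δ := by
  obtain ⟨w, -, -, hw, hpw⟩ := hsub
  intro ζ hζ
  have hβ : β * (ζ * deriv p ζ) ^ n = (1 + A * w ζ) / (1 + B * w ζ) - p ζ ^ δ := by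
    have hpw' : p ζ ^ δ + β * (ζ * deriv p ζ) ^ n = (1 + A * w ζ) / (1 + B * w ζ) := hpw ζ hζ
    rw [← hpw']
    ring
  calc ‖β‖ * ‖ζ * deriv p ζ‖ ^ n = ‖(1 + A * w ζ) / (1 + B * w ζ) - p ζ ^ δ‖ := by
        rw [← hβ, norm_mul β, norm_pow]
    _ ≤ (1 + A) / (1 + B) + ‖p ζ‖ ^ δ := by
        refine (norm_sub_le _ _).trans ?_
        rw [norm_pow]
        gcongr
        exact norm_one_add_mul_div_one_add_mul_le hA hB1 hB0 (hw ζ hζ).le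

lemma exists_norm_sub_one_le_on_ball {n δ : ℕ} (hn : n ≠ 0) {b C : ℝ} (hb : 0 < b) (hC : 0 ≤ C)
    {p : ℂ → ℂ} (hp : DifferentiableOn ℂ p unitDisk) (hp0 : p 0 = 1)
    (h : ∀ ζ ∈ unitDisk, b * ‖ζ * deriv p ζ‖ ^ n ≤ C + ‖p ζ‖ ^ δ) {r : ℝ} (hr0 : 0 < r)
    (hr1 : r < 1) :
    ∃ m σ : ℝ, 0 ≤ σ ∧ b * σ ^ n = C + m ^ δ ∧ m ≤ 1 + σ ∧
      ∀ ζ ∈ ball (0 : ℂ) r, ‖p ζ - 1‖ ≤ σ := by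
  have hball : ball (0 : ℂ) r ⊆ unitDisk := ball_subset_ball hr1.le
  have hbdd : BddAbove ((‖p ·‖) '' ball 0 r) :=
    ((isCompact_closedBall (0 : ℂ) r).bddAbove_image
      (hp.continuousOn.mono (closedBall_subset_ball hr1)).norm).mono
      (image_mono ball_subset_closedBall)
  set m := sSup ((‖p ·‖) '' ball 0 r)
  have hpm : ∀ ζ ∈ ball (0 : ℂ) r, ‖p ζ‖ ≤ m := fun ζ hζ => le_csSup hbdd (mem_image_of_mem _ hζ)
  have hm0 : 0 ≤ m := (norm_nonneg _).trans (hpm 0 (mem_ball_self hr0))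
  set σ := ((C + m ^ δ) / b) ^ (n⁻¹ : ℝ)
  have hσ : σ ^ n = (C + m ^ δ) / b := Real.rpow_inv_natCast_pow (by positivity) hn
  have hσ0 : 0 ≤ σ := by positivity
  have hH : ∀ ζ ∈ ball (0 : ℂ) r, ‖ζ * deriv p ζ‖ ≤ σ := fun ζ hζ => by
    rw [← pow_le_pow_iff_left₀ (norm_nonneg _) hσ0 hn, hσ, le_div_iff₀' hb]
    exact (h ζ (hball hζ)).trans (by gcongr; exact hpm ζ hζ)
  have hp1 : ∀ ζ ∈ ball (0 : ℂ) r, ‖p ζ - 1‖ ≤ σ := fun ζ hζ => by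
    have hζr : ‖ζ‖ < r := by simpa using hζ
    calc ‖p ζ - 1‖ ≤ σ / r * ‖ζ‖ := hp0 ▸ norm_sub_le_of_norm_mul_deriv_le (hp.mono hball) hH hζ
      _ ≤ σ / r * r := by gcongr
      _ = σ := div_mul_cancel₀ σ hr0.ne'
  refine ⟨m, σ, hσ0, by rw [hσ]; field_simp, ?_, hp1⟩
  refine csSup_le ((nonempty_ball.2 hr0).image _) ?_
  rintro _ ⟨ζ, hζ, rfl⟩
  linarith [norm_sub_norm_le (p ζ) 1, norm_one (α := ℂ), hp1 ζ hζ]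

lemma le_one_of_pow_mul_le {n : ℕ} (hn : n ≠ 0) {t c ε W : ℝ} (hc : 0 ≤ c) (hε : 0 ≤ ε)
    (hW : 1 + ε ≤ W) (h : t ^ n * (c + W) ≤ c + 1 + ε * t) : t ≤ 1 := by
  by_contra! ht
  have := le_self_pow₀ ht.le hn
  nlinarith

lemma norm_sub_one_le_one_div_six {n δ : ℕ} (hn : n ≠ 0) (hδ : δ = 0 ∨ δ = 1) {K ω b C : ℝ}
    (hK : 6 ≤ K) (hω : 7 / 6 ≤ ω) (hC : 0 ≤ C) (hb : K ^ n * (C + ω ^ δ) ≤ b) {p : ℂ → ℂ}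
    (hp : DifferentiableOn ℂ p unitDisk) (hp0 : p 0 = 1)
    (h : ∀ ζ ∈ unitDisk, b * ‖ζ * deriv p ζ‖ ^ n ≤ C + ‖p ζ‖ ^ δ) :
    ∀ z ∈ unitDisk, ‖p z - 1‖ ≤ 1 / 6 := by
  intro z hz
  have hz1 : ‖z‖ < 1 := by simpa [unitDisk] using hz
  have hb0 : 0 < b := lt_of_lt_of_le (by positivity) hb
  obtain ⟨m, σ, hσ0, hbσ, hmσ, hball⟩ := exists_norm_sub_one_le_on_ball hn hb0 hC hp hp0 h
    (r := (‖z‖ + 1) / 2) (by positivity) (by linarith)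
  have hσK : 6 * σ ≤ K * σ := by gcongr
  have hbound : (K * σ) ^ n * (C + ω ^ δ) ≤ C + m ^ δ :=
    calc (K * σ) ^ n * (C + ω ^ δ) = σ ^ n * (K ^ n * (C + ω ^ δ)) := by ring
      _ ≤ σ ^ n * b := by gcongr
      _ = C + m ^ δ := by rw [← hbσ, mul_comm]
  have hKσ : K * σ ≤ 1 := by
    rcases hδ with rfl | rfl
    · exact le_one_of_pow_mul_le hn hC (W := 1) le_rfl (by norm_num) (by simpa using hbound)
    · refine le_one_of_pow_mul_le hn hC (ε := 1 / 6) (W := ω) (by norm_num) (by linarith) ?_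
      simp only [pow_one] at hbound
      linarith
  calc ‖p z - 1‖ ≤ σ := hball z (by rw [mem_ball_zero_iff]; linarith)
    _ ≤ 1 / 6 := by linarith

theorem stmt_7_general (n : ℕ) (hn : 0 < n) (δ : ℕ) (hδ : δ = 0 ∨ δ = 1)
    (A B : ℝ) (hB1 : -1 < B) (hB0 : B ≤ 0) (hA0 : 0 < A)
    (β : ℂ)
    (hβ : ((1 + Real.exp 1 ^ 2) ^ ((3 : ℝ) / 2) / (Real.sqrt 2 * Real.exp 1)) ^ n *
        ((1 + A) / (1 + B) + ω₀ ^ δ) ≤ ‖β‖)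
    (p : ℂ → ℂ) (hp : DifferentiableOn ℂ p unitDisk) (hp0 : p 0 = 1)
    (hsub : Subord (fun z => p z ^ δ + β * (z * deriv p z) ^ n)
        (fun z => (1 + (A : ℂ) * z) / (1 + (B : ℂ) * z))) :
    Subord p bean := by
  have hC : 0 ≤ (1 + A) / (1 + B) := div_nonneg (by linarith) (by linarith)
  refine subord_bean_of_norm_sub_one_le hp hp0 ?_
  exact norm_sub_one_le_one_div_six hn.ne' hδ six_le_coeff seven_div_six_le_ω₀ hC hβ hp hp0
    (norm_mul_deriv_pow_le_of_subord hA0.le hB1 hB0 hsub)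

theorem stmt_7 (n : ℕ) (hn : 0 < n) (δ : ℕ) (hδ : δ = 0 ∨ δ = 1)
    (A B : ℝ) (hB1 : -1 < B) (hB0 : B ≤ 0) (hA0 : 0 < A) (hA1 : A ≤ 1)
    (β : ℂ) (hβ0 : β ≠ 0)
    (hβ : ((1 + Real.exp 1 ^ 2) ^ ((3 : ℝ) / 2) / (Real.sqrt 2 * Real.exp 1)) ^ n *
        ((1 + A) / (1 + B) + ω₀ ^ δ) ≤ ‖β‖)
    (p : ℂ → ℂ) (hp : DifferentiableOn ℂ p unitDisk) (hp0 : p 0 = 1)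
    (hsub : Subord (fun z => p z ^ δ + β * (z * deriv p z) ^ n)
        (fun z => (1 + (A : ℂ) * z) / (1 + (B : ℂ) * z))) :
    Subord p bean :=
  stmt_7_general n hn δ hδ A B hB1 hB0 hA0 β hβ p hp hp0 hsub
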